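/- arXiv:2603.13709 — 8 statements merged into one kernel-verified Lean document; each statement's English description precedes it below -/
import Mathlib

section
/- Let m, n be natural numbers with n ≥ 1 and let c, c' : Fin m → ℕ be two histograms with Σ_i c i = Σ_i c' i = n that are adjacent in the replacement sense: there exist indices j1 ≠ j2 with c' j1 = c j1 + 1, c j2 ≥ 1, c' j2 = c j2 − 1, and c' i = c i for all i ∉ {j1, j2}. Then |H(c) − H(c')| ≤ (1/n)·(2 + 1/ln 2 + 2·log₂ n). -/
/-!
Writing `H(c) = log₂ n - (1/n) Σᵢ cᵢ log₂ cᵢ`, an adjacent pair of histograms changes only two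
terms of the sum, each by an increment `(x + 1) log₂ (x + 1) - x log₂ x` with `x + 1 ≤ n`. Such an
increment lies in `[0, log₂ n + 1/ln 2]`, since `x log₂ (1 + 1/x) ≤ 1/ln 2`, and the difference of
two numbers of that interval is bounded by its length.
-/

open Finset

/-- Base-2 Shannon entropy of a histogram `c : Fin m → ℕ` with total count `n`,
with the convention `0 · log₂ 0 = 0` (automatic since `Real.logb 2 0 = 0`). -/
noncomputable def shannonEntropy {m : ℕ} (n : ℕ) (c : Fin m → ℕ) : ℝ :=
  -∑ i, ((c i : ℝ) / n) * Real.logb 2 ((c i : ℝ) / n)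

open Real

noncomputable def mulLogb (x : ℝ) : ℝ := x * logb 2 x

lemma mulLogb_add_one_sub (x : ℝ) :
    mulLogb (x + 1) - mulLogb x = logb 2 (x + 1) + x * (logb 2 (x + 1) - logb 2 x) := by
  unfold mulLogb
  ring

lemma mulLogb_add_one_sub_nonneg {x : ℝ} (hx : 0 ≤ x) : 0 ≤ mulLogb (x + 1) - mulLogb x := by
  rw [mulLogb_add_one_sub]
  rcases hx.eq_or_lt with rfl | hx
  · simp
  · have hlog : 0 ≤ logb 2 (x + 1) := logb_nonneg one_lt_two (by linarith)
    have hmono : logb 2 x ≤ logb 2 (x + 1) := logb_le_logb_of_le one_lt_two hx (by linarith)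
    exact add_nonneg hlog (mul_nonneg hx.le (sub_nonneg.2 hmono))

lemma mul_logb_add_one_sub_logb_le {x : ℝ} (hx : 0 < x) :
    x * (logb 2 (x + 1) - logb 2 x) ≤ 1 / log 2 := by
  have hlog_div : log ((x + 1) / x) ≤ 1 / x :=
    calc log ((x + 1) / x) ≤ (x + 1) / x - 1 := log_le_sub_one_of_pos (by positivity)
      _ = 1 / x := by rw [add_div, div_self hx.ne', add_sub_cancel_left]
  have hlogb : logb 2 (x + 1) - logb 2 x = log ((x + 1) / x) / log 2 := by
    rw [logb, logb, log_div (by positivity) hx.ne', sub_div]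
  calc x * (logb 2 (x + 1) - logb 2 x) = x * log ((x + 1) / x) / log 2 := by
        rw [hlogb, mul_div_assoc]
    _ ≤ x * (1 / x) / log 2 := by gcongr
    _ = 1 / log 2 := by rw [mul_one_div_cancel hx.ne']

lemma mulLogb_add_one_sub_le {x : ℝ} (hx : 0 ≤ x) :
    mulLogb (x + 1) - mulLogb x ≤ logb 2 (x + 1) + 1 / log 2 := by
  rw [mulLogb_add_one_sub]
  rcases hx.eq_or_lt with rfl | hx
  · simp only [zero_mul, add_zero]
    exact le_add_of_nonneg_right (by positivity)
  · linarith [mul_logb_add_one_sub_logb_le hx]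

lemma mulLogb_add_one_sub_le_logb_of_add_one_le {x y : ℝ} (hx : 0 ≤ x) (hxy : x + 1 ≤ y) :
    mulLogb (x + 1) - mulLogb x ≤ logb 2 y + 1 / log 2 := by
  have := logb_le_logb_of_le one_lt_two (by linarith) hxy
  linarith [mulLogb_add_one_sub_le hx]

lemma abs_mulLogb_add_one_sub_sub_le {x y z : ℝ} (hx : 0 ≤ x) (hy : 0 ≤ y) (hxz : x + 1 ≤ z)
    (hyz : y + 1 ≤ z) :
    |(mulLogb (x + 1) - mulLogb x) - (mulLogb (y + 1) - mulLogb y)| ≤ logb 2 z + 1 / log 2 :=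
  abs_sub_le_of_nonneg_of_le (mulLogb_add_one_sub_nonneg hx)
    (mulLogb_add_one_sub_le_logb_of_add_one_le hx hxz) (mulLogb_add_one_sub_nonneg hy)
    (mulLogb_add_one_sub_le_logb_of_add_one_le hy hyz)

lemma shannonEntropy_eq_logb_sub {m n : ℕ} (hn : 0 < n) {c : Fin m → ℕ} (hc : ∑ i, c i = n) :
    shannonEntropy n c = logb 2 n - (∑ i, mulLogb (c i)) / n := by
  have hn' : (n : ℝ) ≠ 0 := by positivity
  have hterm (i : Fin m) : (c i : ℝ) / n * logb 2 ((c i : ℝ) / n) =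
      mulLogb (c i) / n - (c i : ℝ) / n * logb 2 n := by
    rcases (c i).eq_zero_or_pos with hci | hci
    · simp [hci, mulLogb]
    · rw [logb_div (by positivity) hn', mulLogb]
      ring
  have hsum : ∑ i, (c i : ℝ) = n := by exact_mod_cast hc
  rw [shannonEntropy, sum_congr rfl fun i _ => hterm i, sum_sub_distrib, ← sum_div, ← sum_mul,
    ← sum_div, hsum, div_self hn', one_mul]
  ring

lemma sum_sub_sum_eq_of_eqOn_compl_pair {ι M : Type*} [Fintype ι] [DecidableEq ι]
    [AddCommGroup M] (f g : ι → M) {j₁ j₂ : ι} (hj : j₁ ≠ j₂)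
    (hfg : ∀ i, i ≠ j₁ → i ≠ j₂ → f i = g i) :
    ∑ i, f i - ∑ i, g i = (f j₁ - g j₁) + (f j₂ - g j₂) := by
  rw [← sum_sub_distrib]
  exact Fintype.sum_eq_add j₁ j₂ hj fun i hi => sub_eq_zero.mpr (hfg i hi.1 hi.2)

theorem shannon_entropy_sensitivity_general
    {m : ℕ} (n : ℕ) (c c' : Fin m → ℕ)
    (hc : ∑ i, c i = n) (hc' : ∑ i, c' i = n)
    (j1 j2 : Fin m) (hj : j1 ≠ j2)
    (h1 : c' j1 = c j1 + 1)
    (h2pos : 1 ≤ c j2) (h2 : c' j2 = c j2 - 1)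
    (hother : ∀ i, i ≠ j1 → i ≠ j2 → c' i = c i) :
    |shannonEntropy n c - shannonEntropy n c'| ≤
      (1 / (n : ℝ)) * (2 + 1 / Real.log 2 + 2 * Real.logb 2 (n : ℝ)) := by
  have hc'j1 : c' j1 ≤ n := hc' ▸ single_le_sum (fun i _ => Nat.zero_le (c' i)) (mem_univ j1)
  have hcj2 : c j2 ≤ n := hc ▸ single_le_sum (fun i _ => Nat.zero_le (c i)) (mem_univ j2)
  have hn0 : 0 < n := by omega
  have hcj2' : c j2 = c' j2 + 1 := by omega
  have hlogb_n : 0 ≤ logb 2 (n : ℝ) := logb_nonneg one_lt_two (by exact_mod_cast hn0)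
  calc |shannonEntropy n c - shannonEntropy n c'|
      = |(mulLogb (c j1 + 1) - mulLogb (c j1)) - (mulLogb (c' j2 + 1) - mulLogb (c' j2))| / n := by
        rw [shannonEntropy_eq_logb_sub hn0 hc, shannonEntropy_eq_logb_sub hn0 hc',
          sub_sub_sub_cancel_left, ← sub_div, abs_div, abs_of_pos (by positivity : (0 : ℝ) < n),
          sum_sub_sum_eq_of_eqOn_compl_pair _ _ hj fun i hi₁ hi₂ => by rw [hother i hi₁ hi₂],
          h1, hcj2']
        push_cast
        congr 2
        ring
    _ ≤ (logb 2 n + 1 / log 2) / n := by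
        gcongr
        exact abs_mulLogb_add_one_sub_sub_le (by positivity) (by positivity)
          (by exact_mod_cast h1 ▸ hc'j1) (by exact_mod_cast hcj2' ▸ hcj2)
    _ ≤ 1 / n * (2 + 1 / log 2 + 2 * logb 2 n) := by
        rw [one_div_mul_eq_div]
        exact div_le_div_of_nonneg_right (by linarith) (by positivity)

/-- Shannon entropy sensitivity under replacement adjacency:
for adjacent histograms of total `n`, `|H(c) − H(c')| ≤ (1/n)(2 + 1/ln 2 + 2 log₂ n)`. -/
theorem shannon_entropy_sensitivity
    {m : ℕ} (n : ℕ) (hn : 1 ≤ n) (c c' : Fin m → ℕ)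
    (hc : ∑ i, c i = n) (hc' : ∑ i, c' i = n)
    (j1 j2 : Fin m) (hj : j1 ≠ j2)
    (h1 : c' j1 = c j1 + 1)
    (h2pos : 1 ≤ c j2) (h2 : c' j2 = c j2 - 1)
    (hother : ∀ i, i ≠ j1 → i ≠ j2 → c' i = c i) :
    |shannonEntropy n c - shannonEntropy n c'| ≤
      (1 / (n : ℝ)) * (2 + 1 / Real.log 2 + 2 * Real.logb 2 (n : ℝ)) :=
  shannon_entropy_sensitivity_general n c c' hc hc' j1 j2 hj h1 h2pos h2 hother
end

section
/- For every real number a ≥ 1, (a + 1)·log₂(1 + 1/a) ≤ 2. -/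
/-- For every real `a ≥ 1`, `(a + 1) · log₂(1 + 1/a) ≤ 2`. -/
theorem case1_key_estimate (a : ℝ) (ha : 1 ≤ a) :
    (a + 1) * Real.logb 2 (1 + 1 / a) ≤ 2 := by
  have ha0 : (0:ℝ) < a := lt_of_lt_of_le one_pos ha
  have hl2 : (0:ℝ) < Real.log 2 := Real.log_pos (by norm_num)
  have hinv : a * (1/a) = 1 := by field_simp
  -- reduce to log inequality
  rw [Real.logb, ← mul_div_assoc, div_le_iff₀ hl2]
  -- bound 1: log(1+1/a) ≤ 1/a
  have hb1 : Real.log (1 + 1/a) ≤ 1/a := by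
    have := Real.log_le_sub_one_of_pos (x := 1 + 1/a) (by positivity)
    linarith
  -- bound 2: log(1+1/a) ≤ log 2 + ((1+1/a)/2 - 1)
  have hb2 : Real.log (1 + 1/a) - Real.log 2 ≤ (1 + 1/a)/2 - 1 := by
    have := Real.log_le_sub_one_of_pos (x := (1 + 1/a)/2) (by positivity)
    rwa [Real.log_div (by positivity) (by norm_num)] at this
  rcases le_total (a + 1) (2 * a * Real.log 2) with h | h
  · -- use hb1
    have h1 : (a+1) * Real.log (1 + 1/a) ≤ (a+1) * (1/a) :=
      mul_le_mul_of_nonneg_left hb1 (by linarith)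
    have h2 : (a+1) * (1/a) ≤ 2 * Real.log 2 := by
      rw [mul_one_div, div_le_iff₀ ha0]
      nlinarith
    linarith
  · -- use hb2
    have hlog2half : Real.log 2 ≤ (a+1)/(2*a) := by
      rw [le_div_iff₀ (by positivity)]
      nlinarith
    have h1 : (a+1) * Real.log (1 + 1/a) ≤ (a+1) * (Real.log 2 + (1/a - 1)/2) :=
      mul_le_mul_of_nonneg_left (by linarith) (by linarith)
    have key : (a - 1) * Real.log 2 ≤ (a*a - 1)/(2*a) := by
      rw [le_div_iff₀ (by positivity)]
      nlinarith [mul_le_mul_of_nonneg_left hlog2half (sub_nonneg.mpr ha)]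
    have expand : (a+1) * (Real.log 2 + (1/a - 1)/2) = 2 * Real.log 2 + ((a-1) * Real.log 2 - (a*a-1)/(2*a)) := by
      field_simp
      ring
    linarith [expand ▸ h1]
end

section
/- Let α ≥ 1, n ≥ 1, and let p, p' : Fin m → ℝ be probability vectors (all entries nonnegative, entries summing to 1) that differ in exactly two coordinates: p' j1 = p j1 + 1/n, p' j2 = p j2 − 1/n for some j1 ≠ j2 (with p j2 ≥ 1/n), and p' i = p i for all other i. Then |Σ_i (p' i)^α − Σ_i (p i)^α| ≤ 2α/n. -/
open Finset

lemma rpow_abs_sub_le (α : ℝ) (hα : 1 ≤ α) {x y : ℝ}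
    (hx : x ∈ Set.Icc (0:ℝ) 1) (hy : y ∈ Set.Icc (0:ℝ) 1) :
    |x ^ α - y ^ α| ≤ α * |x - y| := by
  have h := Convex.norm_image_sub_le_of_norm_hasDerivWithin_le
    (f := fun t : ℝ => t ^ α) (f' := fun t : ℝ => α * t ^ (α - 1)) (s := Set.Icc (0:ℝ) 1)
    (C := α)
    (fun t ht => (Real.hasDerivAt_rpow_const (Or.inr hα)).hasDerivWithinAt)
    (fun t ht => by
      rw [Real.norm_eq_abs, abs_mul, abs_of_nonneg (le_trans zero_le_one hα),
        abs_of_nonneg (Real.rpow_nonneg ht.1 _)]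
      nlinarith [Real.rpow_le_one ht.1 ht.2 (by linarith : 0 ≤ α - 1),
        Real.rpow_nonneg ht.1 (α - 1)])
    (convex_Icc 0 1) hy hx
  simpa [Real.norm_eq_abs] using h

/-- Step 1 of the Rényi entropy sensitivity analysis: for adjacent normalized
histograms of size `n`, the power sums of order `α ≥ 1` differ by at most `2α/n`. -/
theorem renyi_power_sum_sensitivity
    {m : ℕ} (α : ℝ) (hα : 1 ≤ α) (n : ℕ) (hn : 1 ≤ n)
    (p p' : Fin m → ℝ)
    (hp0 : ∀ i, 0 ≤ p i) (hpsum : ∑ i, p i = 1)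
    (hp'0 : ∀ i, 0 ≤ p' i) (hp'sum : ∑ i, p' i = 1)
    (j1 j2 : Fin m) (hj : j1 ≠ j2)
    (h1 : p' j1 = p j1 + 1 / n)
    (h2ge : 1 / (n : ℝ) ≤ p j2) (h2 : p' j2 = p j2 - 1 / n)
    (hother : ∀ i, i ≠ j1 → i ≠ j2 → p' i = p i) :
    |(∑ i, (p' i) ^ α) - ∑ i, (p i) ^ α| ≤ 2 * α / n := by
  have hn0 : (0:ℝ) < n := by exact_mod_cast hn
  have hle1 : ∀ i, p i ≤ 1 := fun i => hpsum ▸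
    Finset.single_le_sum (fun j _ => hp0 j) (Finset.mem_univ i)
  have hle1' : ∀ i, p' i ≤ 1 := fun i => hp'sum ▸
    Finset.single_le_sum (fun j _ => hp'0 j) (Finset.mem_univ i)
  have hmem : ∀ i, p i ∈ Set.Icc (0:ℝ) 1 := fun i => ⟨hp0 i, hle1 i⟩
  have hmem' : ∀ i, p' i ∈ Set.Icc (0:ℝ) 1 := fun i => ⟨hp'0 i, hle1' i⟩
  set f : Fin m → ℝ := fun i => (p' i) ^ α - (p i) ^ α with hf
  have hsum : (∑ i, (p' i) ^ α) - ∑ i, (p i) ^ α = ∑ i, f i := by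
    rw [← Finset.sum_sub_distrib]
  have hzero : ∀ i ∈ Finset.univ, i ∉ ({j1, j2} : Finset (Fin m)) → f i = 0 := by
    intro i _ hi
    simp only [Finset.mem_insert, Finset.mem_singleton, not_or] at hi
    simp [hf, hother i hi.1 hi.2]
  have hpair : ∑ i, f i = f j1 + f j2 := by
    rw [← Finset.sum_subset (Finset.subset_univ {j1, j2}) hzero,
      Finset.sum_pair hj]
  have b1 : |f j1| ≤ α / n := by
    have := rpow_abs_sub_le α hα (hmem' j1) (hmem j1)
    rw [h1, add_sub_cancel_left,
      abs_of_nonneg (by positivity : (0:ℝ) ≤ 1 / (n:ℝ))] at this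
    simp only [hf]
    rw [h1]
    calc |(p j1 + 1/n) ^ α - (p j1) ^ α| ≤ α * (1/n) := this
      _ = α / n := by ring
  have b2 : |f j2| ≤ α / n := by
    have := rpow_abs_sub_le α hα (hmem' j2) (hmem j2)
    rw [h2, sub_sub_cancel_left, abs_neg,
      abs_of_nonneg (by positivity : (0:ℝ) ≤ 1 / (n:ℝ))] at this
    simp only [hf]
    rw [h2]
    calc |(p j2 - 1/n) ^ α - (p j2) ^ α| ≤ α * (1/n) := this
      _ = α / n := by ring
  rw [hsum, hpair]
  calc |f j1 + f j2| ≤ |f j1| + |f j2| := abs_add_le _ _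
    _ ≤ α / n + α / n := add_le_add b1 b2
    _ = 2 * α / n := by ring
end

section
/- In the Mechanism-F setting, let D be a finset of U with |D| ≥ k, d' ∉ D, D' = insert d' D, and y ∈ U. Let t be an integer with 1 ≤ t ≤ k and let γ > 1 be real, and set ε = ε0 + ln(1 + γ/t). Then PrF D y ≤ exp(ε)·PrF D' y. -/
open Finset

noncomputable section MechanismF

variable {U : Type} [Fintype U] [DecidableEq U]

/-- Seeds of `D` in partition `j` for candidate `y`: `C j D y = {s ∈ D : I s y = j}`. -/
def Cpart (I : U → U → ℕ) (j : ℕ) (D : Finset U) (y : U) : Finset U :=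
  D.filter (fun s => I s y = j)

/-- Pass probability of the privacy test: `pt D j y = T (k − |C j D y|)`. -/
def pt (T : ℤ → ℝ) (k : ℤ) (I : U → U → ℕ) (D : Finset U) (j : ℕ) (y : U) : ℝ :=
  T (k - ((Cpart I j D y).card : ℤ))

/-- Weight of partition `j`: `q D j y = pt D j y · Σ_{s ∈ C j D y} p s y`. -/
def q (p : U → U → ℝ) (T : ℤ → ℝ) (k : ℤ) (I : U → U → ℕ)
    (D : Finset U) (j : ℕ) (y : U) : ℝ :=
  pt T k I D j y * ∑ s ∈ Cpart I j D y, p s y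

/-- Output probability of the mechanism `F`:
`PrF D y = (1/|D|) · Σ_{j ∈ ℕ} q D j y` (only finitely many terms are nonzero). -/
def PrF (p : U → U → ℝ) (T : ℤ → ℝ) (k : ℤ) (I : U → U → ℕ)
    (D : Finset U) (y : U) : ℝ :=
  ((D.card : ℝ))⁻¹ * ∑' j : ℕ, q p T k I D j y

end MechanismF

/-- Lemma (first direction): with `|D| ≥ k`, `D' = insert d' D`, `1 ≤ t ≤ k`, `γ > 1`,
and `ε = ε0 + ln(1 + γ/t)`, we have `PrF D y ≤ exp ε · PrF D' y`. -/
theorem PrF_le_exp_eps_insert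
    {U : Type} [Fintype U] [DecidableEq U]
    (p : U → U → ℝ) (I : U → U → ℕ) (T : ℤ → ℝ) (k : ℤ) (ε0 : ℝ)
    (hp0 : ∀ s y, 0 ≤ p s y) (hp1 : ∀ s, ∑ y, p s y ≤ 1)
    (hk : 1 ≤ k) (hε0 : 0 ≤ ε0)
    (hT0 : ∀ a, 0 ≤ T a) (hT1 : ∀ a, T a ≤ 1)
    (hTanti : ∀ a b : ℤ, a ≤ b → T b ≤ T a)
    (hTstep : ∀ a : ℤ, T a ≤ Real.exp ε0 * T (a + 1))
    (D : Finset U) (hD : k ≤ (D.card : ℤ)) (d' : U) (hd' : d' ∉ D) (y : U)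
    (t : ℤ) (ht1 : 1 ≤ t) (htk : t ≤ k) (γ : ℝ) (hγ : 1 < γ)
    (ε : ℝ) (hε : ε = ε0 + Real.log (1 + γ / (t : ℝ))) :
    PrF p T k I D y ≤ Real.exp ε * PrF p T k I (insert d' D) y := by
  classical
  set D' := insert d' D with hD'def
  have hcard' : ((D'.card : ℝ)) = (D.card : ℝ) + 1 := by
    rw [hD'def, Finset.card_insert_of_notMem hd']; push_cast; ring
  have hq0 : ∀ (E : Finset U) j, 0 ≤ q p T k I E j y := fun E j =>
    mul_nonneg (hT0 _) (Finset.sum_nonneg fun s _ => hp0 s y)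
  have hsum : ∀ E : Finset U, Summable (fun j => q p T k I E j y) := by
    intro E
    apply summable_of_ne_finset_zero (s := E.image fun s => I s y)
    intro j hj
    have hC : Cpart I j E y = ∅ := by
      rw [Cpart, Finset.filter_eq_empty_iff]
      intro s hs hIs
      exact hj (Finset.mem_image.mpr ⟨s, hs, hIs⟩)
    simp [q, hC]
  have hqle : ∀ j, q p T k I D j y ≤ q p T k I D' j y := by
    intro j
    by_cases h : I d' y = j
    · have hd'C : d' ∉ Cpart I j D y := fun hmem => hd' (Finset.mem_of_mem_filter _ hmem)
      have hC : Cpart I j D' y = insert d' (Cpart I j D y) := by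
        simp [Cpart, hD'def, Finset.filter_insert, h]
      have hcardC : ((Cpart I j D' y).card : ℤ) = (Cpart I j D y).card + 1 := by
        rw [hC, Finset.card_insert_of_notMem hd'C]; push_cast; ring
      have hptle : pt T k I D j y ≤ pt T k I D' j y := by
        apply hTanti
        rw [hcardC]; omega
      have hsumle : ∑ s ∈ Cpart I j D y, p s y ≤ ∑ s ∈ Cpart I j D' y, p s y := by
        rw [hC, Finset.sum_insert hd'C]
        linarith [hp0 d' y]
      exact mul_le_mul hptle hsumle (Finset.sum_nonneg fun s _ => hp0 s y) (hT0 _)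
    · have hC : Cpart I j D' y = Cpart I j D y := by
        simp [Cpart, hD'def, Finset.filter_insert, h]
      simp [q, pt, hC]
  have hS : ∑' j, q p T k I D j y ≤ ∑' j, q p T k I D' j y :=
    Summable.tsum_le_tsum hqle (hsum D) (hsum D')
  have hS0 : 0 ≤ ∑' j, q p T k I D' j y := tsum_nonneg fun j => hq0 D' j
  have ht0 : (0:ℝ) < (t : ℝ) := by exact_mod_cast ht1
  have hDk : ((t:ℤ):ℝ) ≤ (D.card : ℝ) := by
    have h1 : (t:ℤ) ≤ (D.card : ℤ) := le_trans htk hD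
    exact_mod_cast h1
  have hDpos : (0:ℝ) < (D.card : ℝ) := lt_of_lt_of_le ht0 hDk
  have hg0 : (0:ℝ) < γ / (t:ℝ) := div_pos (lt_trans zero_lt_one hγ) ht0
  have hgt : γ / (t:ℝ) * (t:ℝ) = γ := div_mul_cancel₀ γ (ne_of_gt ht0)
  have hgD : γ ≤ γ / (t:ℝ) * (D.card : ℝ) := by
    calc γ = γ / (t:ℝ) * (t:ℝ) := hgt.symm
    _ ≤ γ / (t:ℝ) * (D.card : ℝ) := by
        exact mul_le_mul_of_nonneg_left hDk hg0.le
  have hinv : ((D.card:ℝ))⁻¹ ≤ (1 + γ/(t:ℝ)) * ((D'.card : ℝ))⁻¹ := by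
    rw [hcard', inv_eq_one_div, inv_eq_one_div, mul_one_div,
      div_le_div_iff₀ hDpos (by linarith)]
    nlinarith
  have hD'pos : (0:ℝ) < (D'.card : ℝ) := by rw [hcard']; linarith
  have hexp : Real.exp ε = Real.exp ε0 * (1 + γ/(t:ℝ)) := by
    rw [hε, Real.exp_add, Real.exp_log (by positivity)]
  have hexp0 : (1:ℝ) ≤ Real.exp ε0 := by
    rw [← Real.exp_zero]; exact Real.exp_le_exp.mpr hε0
  calc PrF p T k I D y = ((D.card : ℝ))⁻¹ * ∑' j, q p T k I D j y := rfl
    _ ≤ ((D.card : ℝ))⁻¹ * ∑' j, q p T k I D' j y := by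
        exact mul_le_mul_of_nonneg_left hS (by positivity)
    _ ≤ ((1 + γ/(t:ℝ)) * ((D'.card : ℝ))⁻¹) * ∑' j, q p T k I D' j y := by
        exact mul_le_mul_of_nonneg_right hinv hS0
    _ = (1 + γ/(t:ℝ)) * PrF p T k I D' y := by rw [PrF]; ring
    _ ≤ Real.exp ε * PrF p T k I D' y := by
        apply mul_le_mul_of_nonneg_right _ (mul_nonneg (by positivity) hS0)
        rw [hexp]
        nlinarith
end

section
/- In the Mechanism-F setting, let D be a finset of U with |D| ≥ k, d' ∉ D, D' = insert d' D, y ∈ U, and j = I d' y. Let t be an integer with 1 ≤ t ≤ k, let γ > 1 be real, set ε = ε0 + ln(1 + γ/t), and assume additionally that T (k − t) ≤ exp(−ε0·(k − t)). If |C j D y| < t, then PrF D' y ≤ exp(ε)·PrF D y + (1/|D'|)·exp(−ε0·(k − t))·Σ_{s ∈ C j D' y} p s y. -/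
open Finset

/-!
Inserting `d'` changes only the partition `j = I d' y`. Every other partition keeps its
weight, so after renormalising by the larger `|D'| > |D|` their contribution is at most
`PrF D y ≤ exp ε · PrF D y`. Partition `j` now holds at most `t` seeds, so its pass
probability is at most `T (k - t) ≤ exp (-ε0 (k - t))`.
-/

section Insert

variable {U : Type} (p : U → U → ℝ) (T : ℤ → ℝ) (k : ℤ) (I : U → U → ℕ)

lemma q_nonneg (hp0 : ∀ s y, 0 ≤ p s y) (hT0 : ∀ a, 0 ≤ T a) (D : Finset U) (j : ℕ) (y : U) :
    0 ≤ q p T k I D j y :=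
  mul_nonneg (hT0 _) (Finset.sum_nonneg fun s _ => hp0 s y)

lemma PrF_nonneg (hp0 : ∀ s y, 0 ≤ p s y) (hT0 : ∀ a, 0 ≤ T a) (D : Finset U) (y : U) :
    0 ≤ PrF p T k I D y :=
  mul_nonneg (inv_nonneg.mpr (Nat.cast_nonneg _)) (tsum_nonneg (q_nonneg p T k I hp0 hT0 D · y))

lemma q_le_of_card_Cpart_le (hT : Antitone T) {D : Finset U} {j : ℕ} {y : U} {t : ℤ}
    (hp0 : ∀ s y, 0 ≤ p s y) (ht : ((Cpart I j D y).card : ℤ) ≤ t) :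
    q p T k I D j y ≤ T (k - t) * ∑ s ∈ Cpart I j D y, p s y :=
  mul_le_mul_of_nonneg_right (hT (by omega)) (Finset.sum_nonneg fun s _ => hp0 s y)

lemma q_eq_zero_of_notMem_image {D : Finset U} {j : ℕ} {y : U}
    (hj : j ∉ D.image (fun s => I s y)) : q p T k I D j y = 0 := by
  have : Cpart I j D y = ∅ :=
    Finset.filter_eq_empty_iff.mpr fun {s} hs h => hj (Finset.mem_image.mpr ⟨s, hs, h⟩)
  simp [q, this]

lemma q_summable (D : Finset U) (y : U) : Summable (fun j => q p T k I D j y) := by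
  classical
  exact summable_of_ne_finset_zero fun _ => q_eq_zero_of_notMem_image p T k I

/-- The `1/|D|` in `PrF` is junk for `D = ∅`, but then every `q D j y` vanishes as well. -/
lemma card_mul_PrF (D : Finset U) (y : U) :
    (D.card : ℝ) * PrF p T k I D y = ∑' j, q p T k I D j y := by
  classical
  rcases D.eq_empty_or_nonempty with rfl | hD
  · simp [q_eq_zero_of_notMem_image]
  · rw [PrF, ← mul_assoc, mul_inv_cancel₀ (by exact_mod_cast hD.card_pos.ne'), one_mul]

variable [DecidableEq U]

lemma Cpart_insert_of_eq (d : U) (D : Finset U) {j : ℕ} {y : U} (h : I d y = j) :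
    Cpart I j (insert d D) y = insert d (Cpart I j D y) := by
  simp [Cpart, Finset.filter_insert, h]

lemma Cpart_insert_of_ne (d : U) (D : Finset U) {j : ℕ} {y : U} (h : I d y ≠ j) :
    Cpart I j (insert d D) y = Cpart I j D y := by
  simp [Cpart, Finset.filter_insert, h]

lemma card_Cpart_insert_self {d : U} {D : Finset U} (hd : d ∉ D) (y : U) :
    (Cpart I (I d y) (insert d D) y).card = (Cpart I (I d y) D y).card + 1 := by
  rw [Cpart_insert_of_eq I d D rfl, Finset.card_insert_of_notMem]
  exact fun h => hd (Finset.mem_filter.mp h).1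

/-- Adding `d` changes only the partition `I d y`. -/
lemma tsum_q_insert_le (hp0 : ∀ s y, 0 ≤ p s y) (hT0 : ∀ a, 0 ≤ T a) (d : U) (D : Finset U)
    (y : U) :
    ∑' j, q p T k I (insert d D) j y ≤
      ∑' j, q p T k I D j y + q p T k I (insert d D) (I d y) y := by
  set j₀ := I d y
  have hpointwise : ∀ j, q p T k I (insert d D) j y ≤
      q p T k I D j y + if j = j₀ then q p T k I (insert d D) j₀ y else 0 := by
    intro j
    by_cases hj : j = j₀
    · subst hj
      simpa using q_nonneg p T k I hp0 hT0 D _ y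
    · simp [hj, q, pt, Cpart_insert_of_ne I d D (Ne.symm hj)]
  have hsingle : Summable fun j => if j = j₀ then q p T k I (insert d D) j₀ y else 0 :=
    summable_of_ne_finset_zero (s := {j₀}) fun j hj => if_neg (Finset.notMem_singleton.mp hj)
  calc ∑' j, q p T k I (insert d D) j y
      ≤ ∑' j, (q p T k I D j y + if j = j₀ then q p T k I (insert d D) j₀ y else 0) :=
        (q_summable p T k I _ y).tsum_le_tsum hpointwise ((q_summable p T k I D y).add hsingle)
    _ = _ := by rw [(q_summable p T k I D y).tsum_add hsingle, tsum_ite_eq]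

lemma PrF_insert_le (hp0 : ∀ s y, 0 ≤ p s y) (hT0 : ∀ a, 0 ≤ T a) {d : U} {D : Finset U}
    (hd : d ∉ D) (y : U) :
    PrF p T k I (insert d D) y ≤
      PrF p T k I D y + ((insert d D).card : ℝ)⁻¹ * q p T k I (insert d D) (I d y) y := by
  have hratio : (D.card : ℝ) / (insert d D).card ≤ 1 := by
    refine div_le_one_of_le₀ ?_ (Nat.cast_nonneg _)
    rw [Finset.card_insert_of_notMem hd, Nat.cast_succ]
    linarith
  calc PrF p T k I (insert d D) y
      = ((insert d D).card : ℝ)⁻¹ * ∑' j, q p T k I (insert d D) j y := rfl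
    _ ≤ ((insert d D).card : ℝ)⁻¹ *
          (D.card * PrF p T k I D y + q p T k I (insert d D) (I d y) y) := by
        rw [card_mul_PrF]
        exact mul_le_mul_of_nonneg_left (tsum_q_insert_le p T k I hp0 hT0 d D y)
          (inv_nonneg.mpr (Nat.cast_nonneg _))
    _ = (D.card : ℝ) / (insert d D).card * PrF p T k I D y +
          ((insert d D).card : ℝ)⁻¹ * q p T k I (insert d D) (I d y) y := by ring
    _ ≤ _ := by
        gcongr
        exact mul_le_of_le_one_left (PrF_nonneg p T k I hp0 hT0 D y) hratio

end Insert

theorem PrF_insert_le_case_small_general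
    {U : Type} [DecidableEq U]
    (p : U → U → ℝ) (I : U → U → ℕ) (T : ℤ → ℝ) (k : ℤ) (ε0 : ℝ)
    (hp0 : ∀ s y, 0 ≤ p s y)
    (hε0 : 0 ≤ ε0)
    (hT0 : ∀ a, 0 ≤ T a)
    (hTanti : ∀ a b : ℤ, a ≤ b → T b ≤ T a)
    (D : Finset U) (d' : U) (hd' : d' ∉ D) (y : U)
    (t : ℤ) (ht1 : 1 ≤ t) (γ : ℝ) (hγ : 1 < γ)
    (ε : ℝ) (hε : ε = ε0 + Real.log (1 + γ / (t : ℝ)))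
    (hTtail : T (k - t) ≤ Real.exp (-ε0 * ((k - t : ℤ) : ℝ)))
    (hsmall : ((Cpart I (I d' y) D y).card : ℤ) < t) :
    PrF p T k I (insert d' D) y ≤
      Real.exp ε * PrF p T k I D y +
        (((insert d' D).card : ℝ))⁻¹ * Real.exp (-ε0 * ((k - t : ℤ) : ℝ)) *
          ∑ s ∈ Cpart I (I d' y) (insert d' D) y, p s y := by
  have hε_nonneg : 0 ≤ ε := by
    have : 0 ≤ γ / (t : ℝ) := div_nonneg (by linarith) (by exact_mod_cast (by omega : (0 : ℤ) ≤ t))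
    rw [hε]
    linarith [Real.log_nonneg (by linarith : (1 : ℝ) ≤ 1 + γ / t)]
  have hcard : ((Cpart I (I d' y) (insert d' D) y).card : ℤ) ≤ t := by
    rw [card_Cpart_insert_self I hd']
    omega
  have hq : q p T k I (insert d' D) (I d' y) y ≤
      Real.exp (-ε0 * ((k - t : ℤ) : ℝ)) * ∑ s ∈ Cpart I (I d' y) (insert d' D) y, p s y :=
    (q_le_of_card_Cpart_le p T k I (fun a b h => hTanti a b h) hp0 hcard).trans
      (mul_le_mul_of_nonneg_right hTtail (Finset.sum_nonneg fun s _ => hp0 s y))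
  calc PrF p T k I (insert d' D) y
      ≤ PrF p T k I D y + ((insert d' D).card : ℝ)⁻¹ * q p T k I (insert d' D) (I d' y) y :=
        PrF_insert_le p T k I hp0 hT0 hd' y
    _ ≤ _ := by
        rw [mul_assoc]
        gcongr
        exact le_mul_of_one_le_left (PrF_nonneg p T k I hp0 hT0 D y) (Real.one_le_exp hε_nonneg)

/-- Lemma (second direction, Case 1): with `|D| ≥ k`, `D' = insert d' D`, `j = I d' y`,
`1 ≤ t ≤ k`, `γ > 1`, `ε = ε0 + ln(1 + γ/t)`, `T(k − t) ≤ exp(−ε0(k − t))`, and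
`|C j D y| < t`, we have
`PrF D' y ≤ exp ε · PrF D y + (1/|D'|)·exp(−ε0(k − t))·Σ_{s ∈ C j D' y} p s y`. -/
theorem PrF_insert_le_case_small
    {U : Type} [Fintype U] [DecidableEq U]
    (p : U → U → ℝ) (I : U → U → ℕ) (T : ℤ → ℝ) (k : ℤ) (ε0 : ℝ)
    (hp0 : ∀ s y, 0 ≤ p s y) (hp1 : ∀ s, ∑ y, p s y ≤ 1)
    (hk : 1 ≤ k) (hε0 : 0 ≤ ε0)
    (hT0 : ∀ a, 0 ≤ T a) (hT1 : ∀ a, T a ≤ 1)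
    (hTanti : ∀ a b : ℤ, a ≤ b → T b ≤ T a)
    (hTstep : ∀ a : ℤ, T a ≤ Real.exp ε0 * T (a + 1))
    (D : Finset U) (hD : k ≤ (D.card : ℤ)) (d' : U) (hd' : d' ∉ D) (y : U)
    (t : ℤ) (ht1 : 1 ≤ t) (htk : t ≤ k) (γ : ℝ) (hγ : 1 < γ)
    (ε : ℝ) (hε : ε = ε0 + Real.log (1 + γ / (t : ℝ)))
    (hTtail : T (k - t) ≤ Real.exp (-ε0 * ((k - t : ℤ) : ℝ)))
    (hsmall : ((Cpart I (I d' y) D y).card : ℤ) < t) :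
    PrF p T k I (insert d' D) y ≤
      Real.exp ε * PrF p T k I D y +
        (((insert d' D).card : ℝ))⁻¹ * Real.exp (-ε0 * ((k - t : ℤ) : ℝ)) *
          ∑ s ∈ Cpart I (I d' y) (insert d' D) y, p s y :=
  PrF_insert_le_case_small_general p I T k ε0 hp0 hε0 hT0 hTanti D d' hd' y t ht1 γ hγ ε hε hTtail
    hsmall
end

section
/- In the Mechanism-F setting, let D be a finset of U with |D| ≥ k, d' ∉ D, D' = insert d' D, y ∈ U, and j = I d' y. Let t be an integer with 1 ≤ t ≤ k, let γ > 1 be real, and set ε = ε0 + ln(1 + γ/t). If |C j D y| ≥ t and p d' y ≤ (γ/t)·Σ_{s ∈ C j D y} p s y, then PrF D' y ≤ exp(ε)·PrF D y. -/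
open Finset

/-- Lemma (second direction, Case 2): with `|D| ≥ k`, `D' = insert d' D`, `j = I d' y`,
`1 ≤ t ≤ k`, `γ > 1`, `ε = ε0 + ln(1 + γ/t)`, `|C j D y| ≥ t`, and
`p d' y ≤ (γ/t)·Σ_{s ∈ C j D y} p s y`, we have `PrF D' y ≤ exp ε · PrF D y`. -/
theorem PrF_insert_le_case_large
    {U : Type} [Fintype U] [DecidableEq U]
    (p : U → U → ℝ) (I : U → U → ℕ) (T : ℤ → ℝ) (k : ℤ) (ε0 : ℝ)
    (hp0 : ∀ s y, 0 ≤ p s y) (hp1 : ∀ s, ∑ y, p s y ≤ 1)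
    (hk : 1 ≤ k) (hε0 : 0 ≤ ε0)
    (hT0 : ∀ a, 0 ≤ T a) (hT1 : ∀ a, T a ≤ 1)
    (hTanti : ∀ a b : ℤ, a ≤ b → T b ≤ T a)
    (hTstep : ∀ a : ℤ, T a ≤ Real.exp ε0 * T (a + 1))
    (D : Finset U) (hD : k ≤ (D.card : ℤ)) (d' : U) (hd' : d' ∉ D) (y : U)
    (t : ℤ) (ht1 : 1 ≤ t) (htk : t ≤ k) (γ : ℝ) (hγ : 1 < γ)
    (ε : ℝ) (hε : ε = ε0 + Real.log (1 + γ / (t : ℝ)))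
    (hlarge : t ≤ ((Cpart I (I d' y) D y).card : ℤ))
    (hpd' : p d' y ≤ (γ / (t : ℝ)) * ∑ s ∈ Cpart I (I d' y) D y, p s y) :
    PrF p T k I (insert d' D) y ≤ Real.exp ε * PrF p T k I D y := by
  classical
  have hcardD : (0:ℤ) < (D.card : ℤ) := lt_of_lt_of_le hk hD
  have ht0 : (0:ℝ) < (t:ℝ) := by exact_mod_cast ht1
  have hγt : (0:ℝ) < γ / (t:ℝ) := by positivity
  have hx : (0:ℝ) < 1 + γ / (t:ℝ) := by linarith
  have hexpε : Real.exp ε = Real.exp ε0 * (1 + γ / (t:ℝ)) := by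
    rw [hε, Real.exp_add, Real.exp_log hx]
  have hεnn : (1:ℝ) ≤ Real.exp ε := by
    rw [hexpε]
    have h1 : (1:ℝ) ≤ Real.exp ε0 := Real.one_le_exp hε0
    nlinarith
  set J : Finset ℕ := (insert d' D).image (fun s => I s y) with hJ
  have hq0 : ∀ (E : Finset U), ∀ j ∉ (E.image fun s => I s y), q p T k I E j y = 0 := by
    intro E j hj
    have hC : Cpart I j E y = ∅ := by
      ext s
      simp only [Cpart, mem_filter, Finset.notMem_empty, iff_false, not_and]
      intro hs h
      exact hj (mem_image.mpr ⟨s, hs, h⟩)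
    simp [q, hC]
  have hq0D : ∀ j ∉ J, q p T k I D j y = 0 := by
    intro j hj
    refine hq0 D j (fun h => hj ?_)
    exact image_subset_image (subset_insert _ _) h
  have hq0D' : ∀ j ∉ J, q p T k I (insert d' D) j y = 0 := fun j hj => hq0 _ j hj
  have hqnn : ∀ (E : Finset U) (j : ℕ), 0 ≤ q p T k I E j y := fun E j =>
    mul_nonneg (hT0 _) (Finset.sum_nonneg fun s _ => hp0 s y)
  -- key pointwise bound
  have hkey : ∀ j, q p T k I (insert d' D) j y ≤ Real.exp ε * q p T k I D j y := by
    intro j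
    by_cases hjj : j = I d' y
    · subst hjj
      have hd'C : d' ∉ Cpart I (I d' y) D y := fun h => hd' (mem_filter.mp h).1
      have hCins : Cpart I (I d' y) (insert d' D) y
          = insert d' (Cpart I (I d' y) D y) := by
        simp [Cpart, filter_insert]
      have hSnn : 0 ≤ ∑ s ∈ Cpart I (I d' y) D y, p s y :=
        Finset.sum_nonneg fun s _ => hp0 s y
      have hcard : ((Cpart I (I d' y) (insert d' D) y).card : ℤ)
          = ((Cpart I (I d' y) D y).card : ℤ) + 1 := by
        rw [hCins, card_insert_of_notMem hd'C]; push_cast; ring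
      have hsum : ∑ s ∈ Cpart I (I d' y) (insert d' D) y, p s y
          = p d' y + ∑ s ∈ Cpart I (I d' y) D y, p s y := by
        rw [hCins, sum_insert hd'C]
      set c : ℤ := ((Cpart I (I d' y) D y).card : ℤ) with hc
      set S : ℝ := ∑ s ∈ Cpart I (I d' y) D y, p s y with hS
      have hT' : T (k - (c + 1)) ≤ Real.exp ε0 * T (k - c) := by
        have h := hTstep (k - c - 1)
        have e1 : k - (c + 1) = k - c - 1 := by ring
        have e2 : k - c - 1 + 1 = k - c := by ring
        rw [e2] at h
        rw [e1]; exact h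
      have hsle : p d' y + S ≤ (1 + γ / (t:ℝ)) * S := by
        have he : (1 + γ / (t:ℝ)) * S = S + (γ / (t:ℝ)) * S := by ring
        rw [he]
        linarith [hpd']
      have hpdnn : 0 ≤ p d' y + S := by linarith [hp0 d' y]
      have hq' : q p T k I (insert d' D) (I d' y) y = T (k - (c + 1)) * (p d' y + S) := by
        rw [q, pt, hcard, hsum]
      have hq2 : q p T k I D (I d' y) y = T (k - c) * S := by
        rw [q, pt]
      rw [hq', hq2]
      calc T (k - (c + 1)) * (p d' y + S)
          ≤ (Real.exp ε0 * T (k - c)) * ((1 + γ / (t:ℝ)) * S) := by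
            exact mul_le_mul hT' hsle hpdnn (mul_nonneg (Real.exp_pos _).le (hT0 _))
        _ = Real.exp ε * (T (k - c) * S) := by rw [hexpε]; ring
    · have hC : Cpart I j (insert d' D) y = Cpart I j D y := by
        rw [Cpart, Cpart, filter_insert, if_neg (fun h => hjj h.symm)]
      have heq : q p T k I (insert d' D) j y = q p T k I D j y := by
        rw [q, q, pt, pt, hC]
      rw [heq]
      exact le_mul_of_one_le_left (hqnn D j) hεnn
  have hsum_le : ∑ j ∈ J, q p T k I (insert d' D) j y
      ≤ Real.exp ε * ∑ j ∈ J, q p T k I D j y := by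
    rw [Finset.mul_sum]
    exact Finset.sum_le_sum fun j _ => hkey j
  have hDpos : (0:ℝ) < (D.card : ℝ) := by exact_mod_cast hcardD
  have hinv : ((insert d' D).card : ℝ)⁻¹ ≤ ((D.card : ℝ))⁻¹ := by
    apply inv_anti₀ hDpos
    exact_mod_cast card_le_card (subset_insert _ _)
  have hsnn : 0 ≤ ∑ j ∈ J, q p T k I (insert d' D) j y :=
    Finset.sum_nonneg fun j _ => hqnn _ j
  rw [PrF, PrF, tsum_eq_sum hq0D', tsum_eq_sum hq0D]
  calc ((insert d' D).card : ℝ)⁻¹ * ∑ j ∈ J, q p T k I (insert d' D) j y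
      ≤ ((D.card : ℝ))⁻¹ * (Real.exp ε * ∑ j ∈ J, q p T k I D j y) :=
        mul_le_mul hinv hsum_le hsnn (by positivity)
    _ = Real.exp ε * (((D.card : ℝ))⁻¹ * ∑ j ∈ J, q p T k I D j y) := by ring
end

section
/- In the Mechanism-F setting, let D be a finset of U with |D| ≥ k, d' ∉ D, D' = insert d' D, let t be an integer with 1 ≤ t ≤ k, let γ > 1 be real, set ε = ε0 + ln(1 + γ/t) and δ = exp(−ε0·(k − t)), and assume additionally that T (k − t) ≤ exp(−ε0·(k − t)) and that for every y ∈ U with |C (I d' y) D y| ≥ t one has p d' y ≤ (γ/t)·Σ_{s ∈ C (I d' y) D y} p s y. Then for every subset Y of U: Σ_{y ∈ Y} PrF D y ≤ exp(ε)·Σ_{y ∈ Y} PrF D' y + δ, and Σ_{y ∈ Y} PrF D' y ≤ exp(ε)·Σ_{y ∈ Y} PrF D y + δ; that is, the mechanism F satisfies (ε, δ)-differential privacy for this adjacent pair. -/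
open Finset

set_option maxHeartbeats 1600000 in
/-- Theorem (differential privacy of the mechanism `F` under add/remove adjacency):
with `|D| ≥ k`, `D' = insert d' D`, `1 ≤ t ≤ k`, `γ > 1`,
`ε = ε0 + ln(1 + γ/t)` and `δ = exp(−ε0(k − t))`, under the stated tail and
proposal-mass conditions, for every subset `Y` of `U`:
`Σ_{y ∈ Y} PrF D y ≤ exp ε · Σ_{y ∈ Y} PrF D' y + δ` and
`Σ_{y ∈ Y} PrF D' y ≤ exp ε · Σ_{y ∈ Y} PrF D y + δ`. -/
theorem mechanismF_differential_privacy
    {U : Type} [Fintype U] [DecidableEq U]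
    (p : U → U → ℝ) (I : U → U → ℕ) (T : ℤ → ℝ) (k : ℤ) (ε0 : ℝ)
    (hp0 : ∀ s y, 0 ≤ p s y) (hp1 : ∀ s, ∑ y, p s y ≤ 1)
    (hk : 1 ≤ k) (hε0 : 0 ≤ ε0)
    (hT0 : ∀ a, 0 ≤ T a) (hT1 : ∀ a, T a ≤ 1)
    (hTanti : ∀ a b : ℤ, a ≤ b → T b ≤ T a)
    (hTstep : ∀ a : ℤ, T a ≤ Real.exp ε0 * T (a + 1))
    (D : Finset U) (hD : k ≤ (D.card : ℤ)) (d' : U) (hd' : d' ∉ D)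
    (t : ℤ) (ht1 : 1 ≤ t) (htk : t ≤ k) (γ : ℝ) (hγ : 1 < γ)
    (ε δ : ℝ) (hε : ε = ε0 + Real.log (1 + γ / (t : ℝ)))
    (hδ : δ = Real.exp (-ε0 * ((k - t : ℤ) : ℝ)))
    (hTtail : T (k - t) ≤ Real.exp (-ε0 * ((k - t : ℤ) : ℝ)))
    (hmass : ∀ y : U, t ≤ ((Cpart I (I d' y) D y).card : ℤ) →
      p d' y ≤ (γ / (t : ℝ)) * ∑ s ∈ Cpart I (I d' y) D y, p s y) :
    ∀ Y : Finset U,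
      (∑ y ∈ Y, PrF p T k I D y ≤
          Real.exp ε * ∑ y ∈ Y, PrF p T k I (insert d' D) y + δ) ∧
      (∑ y ∈ Y, PrF p T k I (insert d' D) y ≤
          Real.exp ε * ∑ y ∈ Y, PrF p T k I D y + δ) := by
  intro Y
  classical
  set D' := insert d' D with hD'def
  have hcard : ((D'.card : ℝ)) = (D.card : ℝ) + 1 := by
    rw [hD'def, Finset.card_insert_of_notMem hd']; push_cast; ring
  have hn1 : (1:ℝ) ≤ (D.card : ℝ) := by
    have h : (1:ℤ) ≤ (D.card:ℤ) := le_trans hk hD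
    exact_mod_cast h
  have hnpos : (0:ℝ) < (D.card : ℝ) := lt_of_lt_of_le one_pos hn1
  have hq0 : ∀ (E : Finset U) j y, 0 ≤ q p T k I E j y := fun E j y =>
    mul_nonneg (hT0 _) (Finset.sum_nonneg fun s _ => hp0 s y)
  have htpos : (0:ℝ) < (t:ℝ) := by
    have : (0:ℤ) < t := lt_of_lt_of_le one_pos ht1
    exact_mod_cast this
  have hγt : 0 < γ / (t:ℝ) := div_pos (lt_trans one_pos hγ) htpos
  have hexpε : Real.exp ε = Real.exp ε0 * (1 + γ / (t:ℝ)) := by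
    rw [hε, Real.exp_add, Real.exp_log (by linarith)]
  have h1exp0 : 1 ≤ Real.exp ε0 := by nlinarith [Real.add_one_le_exp ε0]
  have hε0ε : Real.exp ε0 ≤ Real.exp ε := by nlinarith [Real.exp_pos ε0, hexpε]
  have h1ε : (1:ℝ) ≤ Real.exp ε := le_trans h1exp0 hε0ε
  have hδ0 : 0 ≤ δ := hδ ▸ (Real.exp_pos _).le
  -- key per-y, per-partition facts
  have hd'C : ∀ y, d' ∉ Cpart I (I d' y) D y := fun y h => hd' (Finset.mem_filter.mp h).1
  have hCins : ∀ y, Cpart I (I d' y) D' y = insert d' (Cpart I (I d' y) D y) := by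
    intro y; simp [Cpart, hD'def, Finset.filter_insert]
  have hCeq : ∀ y j, ¬ I d' y = j → Cpart I j D' y = Cpart I j D y := by
    intro y j hne
    simp [Cpart, hD'def, Finset.filter_insert, hne]
  have hstep : ∀ (c : ℤ), T (k - c - 1) ≤ Real.exp ε0 * T (k - c) := by
    intro c
    have h2 := hTstep (k - c - 1)
    rwa [show k - c - 1 + 1 = k - c by ring] at h2
  have hqD'eq : ∀ y, q p T k I D' (I d' y) y =
      T (k - ((Cpart I (I d' y) D y).card : ℤ) - 1) *
        (p d' y + ∑ s ∈ Cpart I (I d' y) D y, p s y) := by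
    intro y
    rw [q, pt, hCins y, Finset.card_insert_of_notMem (hd'C y),
      Finset.sum_insert (hd'C y)]
    congr 2
    push_cast; ring
  have hkey : ∀ y : U, q p T k I D' (I d' y) y ≤
      Real.exp ε * q p T k I D (I d' y) y + δ * p d' y := by
    intro y
    have hS0 : 0 ≤ ∑ s ∈ Cpart I (I d' y) D y, p s y :=
      Finset.sum_nonneg fun s _ => hp0 s y
    have hw0 : 0 ≤ p d' y := hp0 d' y
    have hqD : q p T k I D (I d' y) y =
        T (k - ((Cpart I (I d' y) D y).card : ℤ)) * ∑ s ∈ Cpart I (I d' y) D y, p s y := rfl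
    set c : ℤ := ((Cpart I (I d' y) D y).card : ℤ) with hc
    set S : ℝ := ∑ s ∈ Cpart I (I d' y) D y, p s y with hS
    rw [hqD, hqD'eq y]
    rcases le_or_gt t c with hct | hct
    · have hw : p d' y ≤ γ / (t:ℝ) * S := hmass y hct
      calc T (k - c - 1) * (p d' y + S)
          ≤ (Real.exp ε0 * T (k - c)) * ((1 + γ / (t:ℝ)) * S) := by
            apply mul_le_mul (hstep c) (by linarith) (by linarith)
            exact mul_nonneg (Real.exp_pos ε0).le (hT0 _)
        _ = Real.exp ε * (T (k - c) * S) := by rw [hexpε]; ring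
        _ ≤ Real.exp ε * (T (k - c) * S) + δ * p d' y :=
            le_add_of_nonneg_right (mul_nonneg hδ0 hw0)
    · have hTd : T (k - c - 1) ≤ δ := by
        calc T (k - c - 1) ≤ T (k - t) := hTanti _ _ (by omega)
          _ ≤ δ := hδ ▸ hTtail
      have h4 : T (k - c - 1) * S ≤ Real.exp ε * (T (k - c) * S) := by
        calc T (k - c - 1) * S ≤ (Real.exp ε0 * T (k - c)) * S :=
              mul_le_mul_of_nonneg_right (hstep c) hS0
          _ ≤ Real.exp ε * (T (k - c) * S) := by
              nlinarith [mul_nonneg (hT0 (k - c)) hS0, hε0ε]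
      have h5 : T (k - c - 1) * p d' y ≤ δ * p d' y :=
        mul_le_mul_of_nonneg_right hTd hw0
      nlinarith [h4, h5]
  have hmono : ∀ y j, q p T k I D j y ≤ q p T k I D' j y := by
    intro y j
    by_cases hj : j = I d' y
    · subst hj
      rw [hqD'eq y, q, pt]
      apply mul_le_mul (hTanti _ _ (by omega)) (le_add_of_nonneg_left (hp0 d' y))
        (Finset.sum_nonneg fun s _ => hp0 s y) (hT0 _)
    · have hne : ¬ I d' y = j := fun h => hj h.symm
      rw [q, q, pt, pt, hCeq y j hne]
  -- tsum to finite sums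
  have hsupD : ∀ y j, j ∉ D'.image (fun s => I s y) → q p T k I D j y = 0 := by
    intro y j hj
    have hC : Cpart I j D y = ∅ := by
      simp only [Cpart]
      apply Finset.filter_eq_empty_iff.mpr
      intro s hs h
      exact hj (Finset.mem_image.mpr ⟨s, Finset.mem_insert_of_mem hs, h⟩)
    simp [q, hC]
  have hsupD' : ∀ y j, j ∉ D'.image (fun s => I s y) → q p T k I D' j y = 0 := by
    intro y j hj
    have hC : Cpart I j D' y = ∅ := by
      simp only [Cpart]
      apply Finset.filter_eq_empty_iff.mpr
      intro s hs h
      exact hj (Finset.mem_image.mpr ⟨s, hs, h⟩)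
    simp [q, hC]
  have hAeq : ∀ y, (∑' j, q p T k I D j y) =
      ∑ j ∈ D'.image (fun s => I s y), q p T k I D j y :=
    fun y => tsum_eq_sum (fun j hj => hsupD y j hj)
  have hBeq : ∀ y, (∑' j, q p T k I D' j y) =
      ∑ j ∈ D'.image (fun s => I s y), q p T k I D' j y :=
    fun y => tsum_eq_sum (fun j hj => hsupD' y j hj)
  have hBA : ∀ y, ∑ j ∈ D'.image (fun s => I s y), q p T k I D' j y ≤
      Real.exp ε * ∑ j ∈ D'.image (fun s => I s y), q p T k I D j y + δ * p d' y := by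
    intro y
    set J := D'.image (fun s => I s y) with hJ
    have hmem : I d' y ∈ J := Finset.mem_image.mpr ⟨d', Finset.mem_insert_self d' D, rfl⟩
    rw [← Finset.sum_erase_add J (fun j => q p T k I D' j y) hmem,
        ← Finset.sum_erase_add J (fun j => q p T k I D j y) hmem]
    have heq : ∑ j ∈ J.erase (I d' y), q p T k I D' j y =
        ∑ j ∈ J.erase (I d' y), q p T k I D j y := by
      apply Finset.sum_congr rfl
      intro j hjmem
      have hne : ¬ I d' y = j := fun h => (Finset.ne_of_mem_erase hjmem) h.symm
      rw [q, q, pt, pt, hCeq y j hne]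
    rw [heq]
    have hE0 : 0 ≤ ∑ j ∈ J.erase (I d' y), q p T k I D j y :=
      Finset.sum_nonneg fun j _ => hq0 D j y
    nlinarith [hkey y, hE0, h1ε]
  have hne1 : (D.card:ℝ) + 1 ≤ Real.exp ε * (D.card:ℝ) := by
    have hkn : (t:ℝ) ≤ (D.card:ℝ) := by exact_mod_cast le_trans htk hD
    have h6 : (1:ℝ) ≤ γ / (t:ℝ) * (D.card:ℝ) := by
      rw [div_mul_eq_mul_div, le_div_iff₀ htpos, one_mul]
      nlinarith
    nlinarith [h1exp0, h6, hnpos, hγt, hexpε]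
  have hPr1 : ∀ y, PrF p T k I D y ≤ Real.exp ε * PrF p T k I D' y := by
    intro y
    rw [PrF, PrF, hAeq y, hBeq y, hcard]
    set A := ∑ j ∈ D'.image (fun s => I s y), q p T k I D j y with hA
    set B := ∑ j ∈ D'.image (fun s => I s y), q p T k I D' j y with hB
    have hA0 : 0 ≤ A := Finset.sum_nonneg fun j _ => hq0 D j y
    have hB0 : 0 ≤ B := Finset.sum_nonneg fun j _ => hq0 D' j y
    have hABy : A ≤ B := Finset.sum_le_sum fun j _ => hmono y j
    rw [inv_mul_eq_div, inv_mul_eq_div, ← mul_div_assoc,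
        div_le_div_iff₀ hnpos (by linarith)]
    calc A * ((D.card:ℝ) + 1) ≤ B * ((D.card:ℝ) + 1) :=
          mul_le_mul_of_nonneg_right hABy (by linarith)
      _ ≤ B * (Real.exp ε * (D.card:ℝ)) := mul_le_mul_of_nonneg_left hne1 hB0
      _ = Real.exp ε * B * (D.card:ℝ) := by ring
  have hPr2 : ∀ y, PrF p T k I D' y ≤ Real.exp ε * PrF p T k I D y + δ * p d' y := by
    intro y
    rw [PrF, PrF, hAeq y, hBeq y, hcard]
    set A := ∑ j ∈ D'.image (fun s => I s y), q p T k I D j y with hA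
    set B := ∑ j ∈ D'.image (fun s => I s y), q p T k I D' j y with hB
    have hA0 : 0 ≤ A := Finset.sum_nonneg fun j _ => hq0 D j y
    have hB0 : 0 ≤ B := Finset.sum_nonneg fun j _ => hq0 D' j y
    have hBA' := hBA y
    have hinv1 : ((D.card:ℝ))⁻¹ ≤ 1 := inv_le_one_of_one_le₀ hn1
    have hinv0 : (0:ℝ) ≤ ((D.card:ℝ))⁻¹ := inv_nonneg.mpr hnpos.le
    have h7 : ((D.card:ℝ) + 1)⁻¹ * B ≤ ((D.card:ℝ))⁻¹ * B := by
      apply mul_le_mul_of_nonneg_right _ hB0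
      apply inv_anti₀ hnpos (by linarith)
    have h8 : ((D.card:ℝ))⁻¹ * B ≤ ((D.card:ℝ))⁻¹ * (Real.exp ε * A + δ * p d' y) :=
      mul_le_mul_of_nonneg_left hBA' hinv0
    have h9 : ((D.card:ℝ))⁻¹ * (Real.exp ε * A + δ * p d' y) ≤
        Real.exp ε * (((D.card:ℝ))⁻¹ * A) + δ * p d' y := by
      have h10 : ((D.card:ℝ))⁻¹ * (δ * p d' y) ≤ δ * p d' y :=
        mul_le_of_le_one_left (mul_nonneg hδ0 (hp0 d' y)) hinv1
      have h11 : ((D.card:ℝ))⁻¹ * (Real.exp ε * A + δ * p d' y)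
          = Real.exp ε * (((D.card:ℝ))⁻¹ * A) + ((D.card:ℝ))⁻¹ * (δ * p d' y) := by
        ring
      rw [h11]
      linarith
    linarith
  constructor
  · calc ∑ y ∈ Y, PrF p T k I D y ≤ ∑ y ∈ Y, Real.exp ε * PrF p T k I D' y :=
        Finset.sum_le_sum fun y _ => hPr1 y
      _ = Real.exp ε * ∑ y ∈ Y, PrF p T k I D' y := by rw [Finset.mul_sum]
      _ ≤ Real.exp ε * ∑ y ∈ Y, PrF p T k I D' y + δ := le_add_of_nonneg_right hδ0
  · have hpY : ∑ y ∈ Y, p d' y ≤ 1 := by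
      calc ∑ y ∈ Y, p d' y ≤ ∑ y, p d' y :=
            Finset.sum_le_sum_of_subset_of_nonneg (Finset.subset_univ Y)
              (fun y _ _ => hp0 d' y)
        _ ≤ 1 := hp1 d'
    calc ∑ y ∈ Y, PrF p T k I D' y
        ≤ ∑ y ∈ Y, (Real.exp ε * PrF p T k I D y + δ * p d' y) :=
          Finset.sum_le_sum fun y _ => hPr2 y
      _ = Real.exp ε * ∑ y ∈ Y, PrF p T k I D y + δ * ∑ y ∈ Y, p d' y := by
          rw [Finset.sum_add_distrib, Finset.mul_sum, Finset.mul_sum]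
      _ ≤ Real.exp ε * ∑ y ∈ Y, PrF p T k I D y + δ := by
          have := mul_le_mul_of_nonneg_left hpY hδ0
          linarith
end

section
/- Let X be a type equipped with a binary adjacency relation adj, and let Ω1, Ω2 be countable types. Suppose M1 : X → PMF Ω1 satisfies (ε1, δ1)-differential privacy and M2 : X → PMF Ω2 satisfies (ε2, δ2)-differential privacy with respect to adj, where ε1, ε2, δ1, δ2 ≥ 0. Then the composed mechanism M : X → PMF (Ω1 × Ω2) defined by M D = (M1 D).bind (fun a => (M2 D).map (fun b => (a, b))) (the independent pair of the two outputs) satisfies (ε1 + ε2, δ1 + δ2)-differential privacy with respect to adj. -/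
open scoped ENNReal

/-- A mechanism `M : X → PMF Ω` satisfies `(ε, δ)`-differential privacy w.r.t. an
adjacency relation `adj` if for all adjacent `D, D'` and every subset `S` of `Ω`,
`Σ_{ω ∈ S} M D ω ≤ exp(ε)·Σ_{ω ∈ S} M D' ω + δ`. -/
def IsDP {X : Type*} {Ω : Type*} (adj : X → X → Prop) (M : X → PMF Ω)
    (ε δ : ℝ) : Prop :=
  ∀ D D', adj D D' → ∀ S : Set Ω,
    ∑' ω : S, M D ω ≤
      ENNReal.ofReal (Real.exp ε) * ∑' ω : S, M D' ω + ENNReal.ofReal δ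

/-!
Conditioning on the first output `a`, the pair mechanism gives `S` the mass
`∑ₐ M₁ D a · g_D a`, where `g_D a` is the `M₂ D`-mass of the section `{b | (a, b) ∈ S}`.
The privacy of `M₂` gives `g_D ≤ min g_D (e^{ε₂} g_{D'}) + δ₂`, and the truncated function
`min g_D (e^{ε₂} g_{D'})` takes values in `[0, 1]`. An `(ε, δ)`-inequality for sets extends to
`[0, 1]`-valued test functions: pointwise `μ ≤ c ν + (μ - c ν)`, and the total excess
`∑ₐ (μ a - c ν a)` is the excess on the set `{c ν < μ}`, hence at most `δ`.
-/

namespace PMF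

variable {α β : Type*}

theorem tsum_subtype_eq_toOuterMeasure (p : PMF α) (s : Set α) :
    ∑' a : s, p a = p.toOuterMeasure s := by
  rw [toOuterMeasure_apply, tsum_subtype]

theorem toOuterMeasure_apply_le_one (p : PMF α) (s : Set α) : p.toOuterMeasure s ≤ 1 :=
  (MeasureTheory.measure_mono (Set.subset_univ s)).trans_eq
    ((toOuterMeasure_apply_eq_one_iff p _).mpr (Set.subset_univ _))

theorem toOuterMeasure_bind_map_prodMk_apply (p : PMF α) (q : PMF β) (s : Set (α × β)) :
    (p.bind fun a => q.map fun b => (a, b)).toOuterMeasure s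
      = ∑' a, p a * q.toOuterMeasure (Prod.mk a ⁻¹' s) := by
  simp only [toOuterMeasure_bind_apply, toOuterMeasure_map_apply]

variable {μ ν : PMF α} {c δ : ℝ≥0∞}

theorem tsum_tsub_mul_le (hc : c ≠ ∞)
    (h : ∀ s, μ.toOuterMeasure s ≤ c * ν.toOuterMeasure s + δ) :
    ∑' a, (μ a - c * ν a) ≤ δ := by
  set s := {a | c * ν a < μ a}
  have hsupport : Function.support (fun a => μ a - c * ν a) ⊆ s := fun a ha =>
    lt_of_not_ge fun hle => ha (tsub_eq_zero_of_le hle)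
  have hν : c * ν.toOuterMeasure s ≠ ∞ := ENNReal.mul_ne_top hc <|
    ne_top_of_le_ne_top ENNReal.one_ne_top (ν.toOuterMeasure_apply_le_one s)
  rw [← tsum_subtype_eq_of_support_subset hsupport]
  refine ENNReal.le_of_add_le_add_left hν ?_
  calc c * ν.toOuterMeasure s + ∑' a : s, (μ a - c * ν a) = μ.toOuterMeasure s := by
        rw [← tsum_subtype_eq_toOuterMeasure, ← tsum_subtype_eq_toOuterMeasure,
          ← ENNReal.tsum_mul_left, ← ENNReal.tsum_add]
        exact tsum_congr fun a => add_tsub_cancel_of_le a.2.le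
    _ ≤ c * ν.toOuterMeasure s + δ := h s

theorem tsum_mul_le_of_forall_toOuterMeasure_le (hc : c ≠ ∞)
    (h : ∀ s, μ.toOuterMeasure s ≤ c * ν.toOuterMeasure s + δ)
    {f : α → ℝ≥0∞} (hf : ∀ a, f a ≤ 1) :
    ∑' a, μ a * f a ≤ c * ∑' a, ν a * f a + δ := by
  have hpoint : ∀ a, μ a * f a ≤ c * (ν a * f a) + (μ a - c * ν a) := fun a =>
    calc μ a * f a ≤ (c * ν a + (μ a - c * ν a)) * f a := by gcongr; exact le_add_tsub
      _ ≤ c * (ν a * f a) + (μ a - c * ν a) := by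
        rw [add_mul, mul_assoc]
        gcongr
        exact mul_le_of_le_one_right' (hf a)
  calc ∑' a, μ a * f a ≤ ∑' a, (c * (ν a * f a) + (μ a - c * ν a)) :=
        ENNReal.tsum_le_tsum hpoint
    _ ≤ c * ∑' a, ν a * f a + δ := by
      rw [ENNReal.tsum_add, ENNReal.tsum_mul_left]
      gcongr
      exact tsum_tsub_mul_le hc h

theorem tsum_mul_le_of_forall_toOuterMeasure_le_of_le_mul_add {c' δ' : ℝ≥0∞} (hc : c ≠ ∞)
    (h : ∀ s, μ.toOuterMeasure s ≤ c * ν.toOuterMeasure s + δ)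
    {f g : α → ℝ≥0∞} (hf : ∀ a, f a ≤ 1) (hfg : ∀ a, f a ≤ c' * g a + δ') :
    ∑' a, μ a * f a ≤ c * (c' * ∑' a, ν a * g a) + δ + δ' := by
  set f' : α → ℝ≥0∞ := fun a => min (f a) (c' * g a)
  have hff' : ∀ a, f a ≤ f' a + δ' := fun a =>
    (le_min le_self_add (hfg a)).trans_eq (min_add_add_right _ _ _)
  calc ∑' a, μ a * f a ≤ ∑' a, (μ a * f' a + μ a * δ') :=
        ENNReal.tsum_le_tsum fun a => by rw [← mul_add]; gcongr; exact hff' a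
    _ = ∑' a, μ a * f' a + δ' := by
        rw [ENNReal.tsum_add, ENNReal.tsum_mul_right, μ.tsum_coe, one_mul]
    _ ≤ c * ∑' a, ν a * f' a + δ + δ' := by
        gcongr
        exact tsum_mul_le_of_forall_toOuterMeasure_le hc h fun a => (min_le_left _ _).trans (hf a)
    _ ≤ c * (c' * ∑' a, ν a * g a) + δ + δ' := by
        rw [← ENNReal.tsum_mul_left (a := c')]
        gcongr c * ?_ + _ + _
        refine ENNReal.tsum_le_tsum fun a => ?_
        rw [mul_left_comm]
        exact mul_le_mul_right (min_le_right _ _) _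

end PMF

theorem sequential_composition_general
    {X : Type*} {Ω1 Ω2 : Type*}
    (adj : X → X → Prop)
    (M1 : X → PMF Ω1) (M2 : X → PMF Ω2)
    (ε1 ε2 δ1 δ2 : ℝ)
    (hδ1 : 0 ≤ δ1) (hδ2 : 0 ≤ δ2)
    (h1 : IsDP adj M1 ε1 δ1) (h2 : IsDP adj M2 ε2 δ2) :
    IsDP adj (fun D => (M1 D).bind (fun a => (M2 D).map (fun b => (a, b))))
      (ε1 + ε2) (δ1 + δ2) := by
  simp only [IsDP, PMF.tsum_subtype_eq_toOuterMeasure] at h1 h2 ⊢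
  intro D D' hadj S
  rw [PMF.toOuterMeasure_bind_map_prodMk_apply, PMF.toOuterMeasure_bind_map_prodMk_apply,
    Real.exp_add, ENNReal.ofReal_mul (Real.exp_nonneg _), ENNReal.ofReal_add hδ1 hδ2, mul_assoc,
    ← add_assoc]
  exact PMF.tsum_mul_le_of_forall_toOuterMeasure_le_of_le_mul_add ENNReal.ofReal_ne_top
    (h1 D D' hadj) (fun _ => PMF.toOuterMeasure_apply_le_one _ _) (fun _ => h2 D D' hadj _)

/-- Sequential composition: if `M1` is `(ε1, δ1)`-DP and `M2` is `(ε2, δ2)`-DP, then the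
independent pair mechanism `D ↦ (M1 D).bind (fun a => (M2 D).map (fun b => (a, b)))`
is `(ε1 + ε2, δ1 + δ2)`-DP. -/
theorem sequential_composition
    {X : Type*} {Ω1 Ω2 : Type*} [Countable Ω1] [Countable Ω2]
    (adj : X → X → Prop)
    (M1 : X → PMF Ω1) (M2 : X → PMF Ω2)
    (ε1 ε2 δ1 δ2 : ℝ)
    (hε1 : 0 ≤ ε1) (hε2 : 0 ≤ ε2) (hδ1 : 0 ≤ δ1) (hδ2 : 0 ≤ δ2)
    (h1 : IsDP adj M1 ε1 δ1) (h2 : IsDP adj M2 ε2 δ2) :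
    IsDP adj (fun D => (M1 D).bind (fun a => (M2 D).map (fun b => (a, b))))
      (ε1 + ε2) (δ1 + δ2) :=
  sequential_composition_general adj M1 M2 ε1 ε2 δ1 δ2 hδ1 hδ2 h1 h2
end
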